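/- arXiv:2008.07161 — 6 statements merged into one kernel-verified Lean document; each statement's English description precedes it below -/
import Mathlib

section
/- Let κ = algebraMap ℝ 𝔠ₙ x + ι v be a paravector and let λ ∈ ℂ. Then in the complexification 𝔎ₙ one has (λ • 1 − 1 ⊗ₜ κ*) * (λ • 1 − 1 ⊗ₜ κ) = (λ • 1 − 1 ⊗ₜ κ) * (λ • 1 − 1 ⊗ₜ κ*) = (λ² − 2λx + (x² + ‖v‖²)) • 1. Moreover, λ • 1 − 1 ⊗ₜ κ is a unit of 𝔎ₙ if and only if λ ∉ {s₊(κ), s₋(κ)}, and in that case its inverse equals (λ² − 2λx + (x² + ‖v‖²))⁻¹ • (λ • 1 − 1 ⊗ₜ κ*). -/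
open scoped TensorProduct

/-- The paravector `κ = x + ι v` in the Clifford algebra. -/
noncomputable def paravec {n : ℕ} (Q : QuadraticForm ℝ (EuclideanSpace ℝ (Fin n)))
    (x : ℝ) (v : EuclideanSpace ℝ (Fin n)) : CliffordAlgebra Q :=
  algebraMap ℝ (CliffordAlgebra Q) x + CliffordAlgebra.ι Q v

/-- The Clifford conjugate paravector `κ* = x - ι v`. -/
noncomputable def paravecConj {n : ℕ} (Q : QuadraticForm ℝ (EuclideanSpace ℝ (Fin n)))
    (x : ℝ) (v : EuclideanSpace ℝ (Fin n)) : CliffordAlgebra Q :=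
  algebraMap ℝ (CliffordAlgebra Q) x - CliffordAlgebra.ι Q v

/-!
`κ` and `κ*` commute, with `κ + κ* = 2x` and `κ* κ = x² + ‖v‖²`, so `(λ - κ*)(λ - κ)` is
the scalar `p(λ) = (λ - s₊)(λ - s₋)`; for `p(λ) ≠ 0` this exhibits the inverse. If `p(λ) = 0`
and `λ - κ` were a unit, then `λ - κ* = 0`; the grade involution swaps `κ*` and `κ`, so
`λ - κ = 0` would be a unit of the nontrivial algebra `ℂ ⊗ 𝔠ₙ`.
-/

section Algebra

variable {K : Type*} [Ring K] [Algebra ℂ K]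

theorem smul_one_sub_mul_smul_one_sub {a b : K} {r s : ℂ} (hba : b * a = r • 1)
    (hab : a + b = s • 1) (lam : ℂ) :
    (lam • (1 : K) - b) * (lam • 1 - a) = (lam ^ 2 - lam * s + r) • 1 := by
  have expand : (lam • (1 : K) - b) * (lam • 1 - a) = lam ^ 2 • 1 - lam • (a + b) + b * a := by
    simp only [sub_mul, mul_sub, one_mul, mul_one, smul_mul_assoc, mul_smul_comm, smul_add]
    module
  rw [expand, hba, hab]
  module

theorem mul_inv_smul_eq_one_of_mul_eq_smul_one {u w : K} {p : ℂ} (hp : p ≠ 0)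
    (huw : u * w = p • 1) : u * (p⁻¹ • w) = 1 := by
  rw [mul_smul_comm, huw, smul_smul, inv_mul_cancel₀ hp, one_smul]

theorem inv_smul_mul_eq_one_of_mul_eq_smul_one {u w : K} {p : ℂ} (hp : p ≠ 0)
    (hwu : w * u = p • 1) : (p⁻¹ • w) * u = 1 := by
  rw [smul_mul_assoc, hwu, smul_smul, inv_mul_cancel₀ hp, one_smul]

end Algebra

section Complexification

variable {A : Type*} [Ring A] [Algebra ℝ A]

theorem one_tmul_algebraMap (t : ℝ) :
    (1 : ℂ) ⊗ₜ[ℝ] algebraMap ℝ A t = (t : ℂ) • (1 : ℂ ⊗[ℝ] A) := by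
  rw [Algebra.algebraMap_eq_smul_one, TensorProduct.tmul_smul, Algebra.TensorProduct.one_def]
  exact (Complex.coe_smul t _).symm

theorem smul_one_sub_one_tmul_mul_smul_one_sub_one_tmul {a b : A} {r s : ℝ}
    (hba : b * a = algebraMap ℝ A r) (hab : a + b = algebraMap ℝ A s) (lam : ℂ) :
    (lam • (1 : ℂ ⊗[ℝ] A) - (1 : ℂ) ⊗ₜ[ℝ] b) * (lam • 1 - (1 : ℂ) ⊗ₜ[ℝ] a)
      = (lam ^ 2 - lam * s + r) • 1 := by
  refine smul_one_sub_mul_smul_one_sub ?_ ?_ lam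
  · rw [Algebra.TensorProduct.tmul_mul_tmul, one_mul, hba, one_tmul_algebraMap]
  · rw [← TensorProduct.tmul_add, hab, one_tmul_algebraMap]

theorem lTensor_smul_one_sub_one_tmul {B : Type*} [Ring B] [Algebra ℝ B] (f : A →ₐ[ℝ] B)
    (lam : ℂ) (a : A) :
    Algebra.TensorProduct.lTensor (S := ℂ) ℂ f (lam • (1 : ℂ ⊗[ℝ] A) - (1 : ℂ) ⊗ₜ[ℝ] a)
      = lam • 1 - (1 : ℂ) ⊗ₜ[ℝ] f a := by
  simp only [map_sub, map_smul, map_one, Algebra.TensorProduct.map_tmul]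

end Complexification

section Paravector

variable {n : ℕ} {Q : QuadraticForm ℝ (EuclideanSpace ℝ (Fin n))}
  (x : ℝ) (v : EuclideanSpace ℝ (Fin n))

theorem paravecConj_mul_paravec :
    paravecConj Q x v * paravec Q x v = algebraMap ℝ _ (x ^ 2 - Q v) := by
  simp only [paravecConj, paravec, sub_mul, mul_add, CliffordAlgebra.ι_sq_scalar,
    Algebra.commutes x (CliffordAlgebra.ι Q v), map_sub, sq, map_mul]
  abel

theorem paravec_mul_paravecConj :
    paravec Q x v * paravecConj Q x v = algebraMap ℝ _ (x ^ 2 - Q v) := by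
  simp only [paravecConj, paravec, add_mul, mul_sub, CliffordAlgebra.ι_sq_scalar,
    Algebra.commutes x (CliffordAlgebra.ι Q v), map_sub, sq, map_mul]
  abel

theorem paravec_add_paravecConj :
    paravec Q x v + paravecConj Q x v = algebraMap ℝ _ (2 * x) := by
  rw [paravec, paravecConj, two_mul, map_add]
  abel

theorem involute_paravecConj :
    CliffordAlgebra.involute (paravecConj Q x v) = paravec Q x v := by
  simp only [paravecConj, paravec, map_sub, AlgHom.commutes, CliffordAlgebra.involute_ι,
    sub_neg_eq_add]

end Paravector

theorem sq_sub_two_mul_add_eq_zero_iff (x a : ℝ) (lam : ℂ) :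
    lam ^ 2 - 2 * lam * (x : ℂ) + ((x ^ 2 + a ^ 2 : ℝ) : ℂ) = 0
      ↔ lam ∈ ({(x : ℂ) + a * Complex.I, (x : ℂ) - a * Complex.I} : Set ℂ) := by
  have factor : lam ^ 2 - 2 * lam * (x : ℂ) + ((x ^ 2 + a ^ 2 : ℝ) : ℂ)
      = (lam - ((x : ℂ) + a * Complex.I)) * (lam - ((x : ℂ) - a * Complex.I)) := by
    push_cast
    linear_combination (a : ℂ) ^ 2 * Complex.I_sq
  rw [factor, mul_eq_zero, sub_eq_zero, sub_eq_zero, Set.mem_insert_iff, Set.mem_singleton_iff]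

theorem stmt0_general {n : ℕ}
    (Q : QuadraticForm ℝ (EuclideanSpace ℝ (Fin n)))
    (hQ : ∀ v : EuclideanSpace ℝ (Fin n), Q v = -‖v‖ ^ 2)
    (x : ℝ) (v : EuclideanSpace ℝ (Fin n)) (lam : ℂ) :
    (lam • (1 : ℂ ⊗[ℝ] CliffordAlgebra Q) - (1 : ℂ) ⊗ₜ[ℝ] paravecConj Q x v) *
        (lam • 1 - (1 : ℂ) ⊗ₜ[ℝ] paravec Q x v)
      = (lam ^ 2 - 2 * lam * (x : ℂ) + ((x ^ 2 + ‖v‖ ^ 2 : ℝ) : ℂ)) •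
          (1 : ℂ ⊗[ℝ] CliffordAlgebra Q) ∧
    (lam • (1 : ℂ ⊗[ℝ] CliffordAlgebra Q) - (1 : ℂ) ⊗ₜ[ℝ] paravec Q x v) *
        (lam • 1 - (1 : ℂ) ⊗ₜ[ℝ] paravecConj Q x v)
      = (lam ^ 2 - 2 * lam * (x : ℂ) + ((x ^ 2 + ‖v‖ ^ 2 : ℝ) : ℂ)) •
          (1 : ℂ ⊗[ℝ] CliffordAlgebra Q) ∧
    (IsUnit (lam • (1 : ℂ ⊗[ℝ] CliffordAlgebra Q) - (1 : ℂ) ⊗ₜ[ℝ] paravec Q x v)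
      ↔ lam ∉ ({(x : ℂ) + ‖v‖ * Complex.I, (x : ℂ) - ‖v‖ * Complex.I} : Set ℂ)) ∧
    (lam ∉ ({(x : ℂ) + ‖v‖ * Complex.I, (x : ℂ) - ‖v‖ * Complex.I} : Set ℂ) →
      (lam • (1 : ℂ ⊗[ℝ] CliffordAlgebra Q) - (1 : ℂ) ⊗ₜ[ℝ] paravec Q x v) *
          ((lam ^ 2 - 2 * lam * (x : ℂ) + ((x ^ 2 + ‖v‖ ^ 2 : ℝ) : ℂ))⁻¹ •
            (lam • 1 - (1 : ℂ) ⊗ₜ[ℝ] paravecConj Q x v)) = 1 ∧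
      ((lam ^ 2 - 2 * lam * (x : ℂ) + ((x ^ 2 + ‖v‖ ^ 2 : ℝ) : ℂ))⁻¹ •
            (lam • (1 : ℂ ⊗[ℝ] CliffordAlgebra Q) - (1 : ℂ) ⊗ₜ[ℝ] paravecConj Q x v)) *
          (lam • 1 - (1 : ℂ) ⊗ₜ[ℝ] paravec Q x v) = 1) := by
  set p : ℂ := lam ^ 2 - 2 * lam * (x : ℂ) + ((x ^ 2 + ‖v‖ ^ 2 : ℝ) : ℂ)
  have hQv : x ^ 2 - Q v = x ^ 2 + ‖v‖ ^ 2 := by rw [hQ, sub_neg_eq_add]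
  have coeff : lam ^ 2 - lam * ((2 * x : ℝ) : ℂ) + ((x ^ 2 + ‖v‖ ^ 2 : ℝ) : ℂ) = p := by
    simp only [p]; push_cast; ring
  have conj_mul : (lam • (1 : ℂ ⊗[ℝ] CliffordAlgebra Q) - (1 : ℂ) ⊗ₜ[ℝ] paravecConj Q x v) *
      (lam • 1 - (1 : ℂ) ⊗ₜ[ℝ] paravec Q x v) = p • 1 :=
    coeff ▸ smul_one_sub_one_tmul_mul_smul_one_sub_one_tmul
      (hQv ▸ paravecConj_mul_paravec x v) (paravec_add_paravecConj x v) lam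
  have mul_conj : (lam • (1 : ℂ ⊗[ℝ] CliffordAlgebra Q) - (1 : ℂ) ⊗ₜ[ℝ] paravec Q x v) *
      (lam • 1 - (1 : ℂ) ⊗ₜ[ℝ] paravecConj Q x v) = p • 1 :=
    coeff ▸ smul_one_sub_one_tmul_mul_smul_one_sub_one_tmul (hQv ▸ paravec_mul_paravecConj x v)
      ((add_comm _ _).trans (paravec_add_paravecConj x v)) lam
  have root_iff : p = 0 ↔ _ := sq_sub_two_mul_add_eq_zero_iff x ‖v‖ lam
  have right_inv (hp : p ≠ 0) := mul_inv_smul_eq_one_of_mul_eq_smul_one hp mul_conj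
  have left_inv (hp : p ≠ 0) := inv_smul_mul_eq_one_of_mul_eq_smul_one hp conj_mul
  refine ⟨conj_mul, mul_conj, ⟨fun hu hmem => ?_, fun hmem => ?_⟩,
    fun hmem => ⟨right_inv (mt root_iff.1 hmem), left_inv (mt root_iff.1 hmem)⟩⟩
  · have hconj := hu.mul_left_eq_zero.1 <| by
      rw [conj_mul, root_iff.2 hmem, zero_smul]
    have hzero :=
      congrArg (Algebra.TensorProduct.lTensor (S := ℂ) ℂ CliffordAlgebra.involute) hconj
    rw [lTensor_smul_one_sub_one_tmul, involute_paravecConj, map_zero] at hzero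
    exact not_isUnit_zero (hzero ▸ hu)
  · have hp : p ≠ 0 := mt root_iff.1 hmem
    exact ⟨⟨_, _, right_inv hp, left_inv hp⟩, rfl⟩

/-- identities for `(λ•1 - 1⊗κ*)(λ•1 - 1⊗κ)` in the complexification,
invertibility of `λ•1 - 1⊗κ` iff `λ ∉ {s₊(κ), s₋(κ)}`, and the formula for the inverse. -/
theorem stmt0 {n : ℕ} (hn : 1 ≤ n)
    (Q : QuadraticForm ℝ (EuclideanSpace ℝ (Fin n)))
    (hQ : ∀ v : EuclideanSpace ℝ (Fin n), Q v = -‖v‖ ^ 2)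
    (x : ℝ) (v : EuclideanSpace ℝ (Fin n)) (lam : ℂ) :
    (lam • (1 : ℂ ⊗[ℝ] CliffordAlgebra Q) - (1 : ℂ) ⊗ₜ[ℝ] paravecConj Q x v) *
        (lam • 1 - (1 : ℂ) ⊗ₜ[ℝ] paravec Q x v)
      = (lam ^ 2 - 2 * lam * (x : ℂ) + ((x ^ 2 + ‖v‖ ^ 2 : ℝ) : ℂ)) •
          (1 : ℂ ⊗[ℝ] CliffordAlgebra Q) ∧
    (lam • (1 : ℂ ⊗[ℝ] CliffordAlgebra Q) - (1 : ℂ) ⊗ₜ[ℝ] paravec Q x v) *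
        (lam • 1 - (1 : ℂ) ⊗ₜ[ℝ] paravecConj Q x v)
      = (lam ^ 2 - 2 * lam * (x : ℂ) + ((x ^ 2 + ‖v‖ ^ 2 : ℝ) : ℂ)) •
          (1 : ℂ ⊗[ℝ] CliffordAlgebra Q) ∧
    (IsUnit (lam • (1 : ℂ ⊗[ℝ] CliffordAlgebra Q) - (1 : ℂ) ⊗ₜ[ℝ] paravec Q x v)
      ↔ lam ∉ ({(x : ℂ) + ‖v‖ * Complex.I, (x : ℂ) - ‖v‖ * Complex.I} : Set ℂ)) ∧
    (lam ∉ ({(x : ℂ) + ‖v‖ * Complex.I, (x : ℂ) - ‖v‖ * Complex.I} : Set ℂ) →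
      (lam • (1 : ℂ ⊗[ℝ] CliffordAlgebra Q) - (1 : ℂ) ⊗ₜ[ℝ] paravec Q x v) *
          ((lam ^ 2 - 2 * lam * (x : ℂ) + ((x ^ 2 + ‖v‖ ^ 2 : ℝ) : ℂ))⁻¹ •
            (lam • 1 - (1 : ℂ) ⊗ₜ[ℝ] paravecConj Q x v)) = 1 ∧
      ((lam ^ 2 - 2 * lam * (x : ℂ) + ((x ^ 2 + ‖v‖ ^ 2 : ℝ) : ℂ))⁻¹ •
            (lam • (1 : ℂ ⊗[ℝ] CliffordAlgebra Q) - (1 : ℂ) ⊗ₜ[ℝ] paravecConj Q x v)) *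
          (lam • 1 - (1 : ℂ) ⊗ₜ[ℝ] paravec Q x v) = 1) :=
  stmt0_general Q hQ x v lam
end

section
/- Let κ = algebraMap ℝ 𝔠ₙ x + ι v be a paravector with v ≠ 0. Then in 𝔎ₙ: (1 ⊗ₜ κ) * ι₊(κ) = s₊(κ) • ι₊(κ) and (1 ⊗ₜ κ) * ι₋(κ) = s₋(κ) • ι₋(κ); consequently 1 ⊗ₜ κ = s₊(κ) • ι₊(κ) + s₋(κ) • ι₋(κ), and for every a ∈ 𝔎ₙ one has (1 ⊗ₜ κ) * (ι₊(κ) * a) = s₊(κ) • (ι₊(κ) * a) and (1 ⊗ₜ κ) * (ι₋(κ) * a) = s₋(κ) • (ι₋(κ) * a). -/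
/-
Write `κ = x + ‖v‖ 𝔰_κ` with `𝔰_κ = ι(v / ‖v‖)`. Since `Q(v / ‖v‖) = -1`, the element
`e = 1 ⊗ 𝔰_κ` of the complexification is a square root of `-1`, and for any `ζ` with
`ζ² = -1` the element `1 - ζ e` is an eigenvector of left multiplication by `c + r e` with
eigenvalue `c + r ζ`. Taking `ζ = ±i` gives both eigenrelations; as `ι₊ + ι₋ = 1` they add up
to the spectral decomposition, and they pass to the left ideals generated by `ι±`.
-/

open scoped TensorProduct

/-- The eigenvalue `s₊(κ) = x + i‖v‖`. -/
noncomputable def sPlus {n : ℕ} (x : ℝ) (v : EuclideanSpace ℝ (Fin n)) : ℂ :=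
  (x : ℂ) + ‖v‖ * Complex.I

/-- The eigenvalue `s₋(κ) = x - i‖v‖`. -/
noncomputable def sMinus {n : ℕ} (x : ℝ) (v : EuclideanSpace ℝ (Fin n)) : ℂ :=
  (x : ℂ) - ‖v‖ * Complex.I

/-- The idempotent `ι₊(κ) = (1/2) • (1 - i • (1 ⊗ 𝔰_κ))` in the complexification. -/
noncomputable def iotaP {n : ℕ} (Q : QuadraticForm ℝ (EuclideanSpace ℝ (Fin n)))
    (v : EuclideanSpace ℝ (Fin n)) : ℂ ⊗[ℝ] CliffordAlgebra Q :=
  (1/2 : ℝ) • (1 - Complex.I • ((1 : ℂ) ⊗ₜ[ℝ] CliffordAlgebra.ι Q (‖v‖⁻¹ • v)))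

/-- The idempotent `ι₋(κ) = (1/2) • (1 + i • (1 ⊗ 𝔰_κ))` in the complexification. -/
noncomputable def iotaM {n : ℕ} (Q : QuadraticForm ℝ (EuclideanSpace ℝ (Fin n)))
    (v : EuclideanSpace ℝ (Fin n)) : ℂ ⊗[ℝ] CliffordAlgebra Q :=
  (1/2 : ℝ) • (1 + Complex.I • ((1 : ℂ) ⊗ₜ[ℝ] CliffordAlgebra.ι Q (‖v‖⁻¹ • v)))

theorem add_smul_mul_one_sub_smul_of_mul_self_eq_neg_one {A : Type*} [Ring A] [Algebra ℂ A]
    {e : A} (he : e * e = -1) {ζ : ℂ} (hζ : ζ * ζ = -1) (c r : ℂ) :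
    (c • 1 + r • e) * (1 - ζ • e) = (c + r * ζ) • (1 - ζ • e) := by
  have he' : e * e = (-1 : ℂ) • (1 : A) := by rw [he, neg_one_smul]
  simp only [mul_sub, add_mul, smul_mul_assoc, mul_smul_comm, smul_smul, he',
    mul_one, one_mul, smul_sub]
  match_scalars
  · ring
  · linear_combination r * hζ

theorem mul_mul_eq_smul_mul_of_mul_eq_smul {R A : Type*} [CommSemiring R] [Semiring A]
    [Algebra R A] {k p : A} {s : R} (h : k * p = s • p) (a : A) :
    k * (p * a) = s • (p * a) := by
  rw [← mul_assoc, h, smul_mul_assoc]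

theorem CliffordAlgebra.one_tmul_ι_mul_self {M : Type*} [AddCommGroup M] [Module ℝ M]
    {Q : QuadraticForm ℝ M} {u : M} (hu : Q u = -1) :
    ((1 : ℂ) ⊗ₜ[ℝ] ι Q u) * ((1 : ℂ) ⊗ₜ[ℝ] ι Q u) = -1 := by
  rw [Algebra.TensorProduct.tmul_mul_tmul, one_mul, ι_sq_scalar, hu, map_neg, map_one,
    TensorProduct.tmul_neg, Algebra.TensorProduct.one_def]

section Paravector

variable {n : ℕ} (Q : QuadraticForm ℝ (EuclideanSpace ℝ (Fin n)))

theorem one_tmul_paravec (x : ℝ) {v : EuclideanSpace ℝ (Fin n)} (hv : v ≠ 0) :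
    (1 : ℂ) ⊗ₜ[ℝ] paravec Q x v = (x : ℂ) • (1 : ℂ ⊗[ℝ] CliffordAlgebra Q)
      + (‖v‖ : ℂ) • ((1 : ℂ) ⊗ₜ[ℝ] CliffordAlgebra.ι Q (‖v‖⁻¹ • v)) := by
  have hιv : CliffordAlgebra.ι Q v = ‖v‖ • CliffordAlgebra.ι Q (‖v‖⁻¹ • v) := by
    rw [← map_smul, smul_inv_smul₀ (norm_ne_zero_iff.mpr hv)]
  rw [paravec, TensorProduct.tmul_add, hιv, Algebra.algebraMap_eq_smul_one,
    TensorProduct.tmul_smul, TensorProduct.tmul_smul, ← Algebra.TensorProduct.one_def,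
    ← algebraMap_smul ℂ x, ← algebraMap_smul ℂ ‖v‖, Complex.coe_algebraMap]

theorem iotaP_eq (v : EuclideanSpace ℝ (Fin n)) :
    iotaP Q v =
      (1/2 : ℂ) • (1 - Complex.I • ((1 : ℂ) ⊗ₜ[ℝ] CliffordAlgebra.ι Q (‖v‖⁻¹ • v))) := by
  rw [iotaP, ← algebraMap_smul ℂ (1/2 : ℝ)]
  norm_num

theorem iotaM_eq (v : EuclideanSpace ℝ (Fin n)) :
    iotaM Q v =
      (1/2 : ℂ) • (1 - (-Complex.I) • ((1 : ℂ) ⊗ₜ[ℝ] CliffordAlgebra.ι Q (‖v‖⁻¹ • v))) := by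
  rw [iotaM, ← algebraMap_smul ℂ (1/2 : ℝ), neg_smul, sub_neg_eq_add]
  norm_num

theorem iotaP_add_iotaM (v : EuclideanSpace ℝ (Fin n)) : iotaP Q v + iotaM Q v = 1 := by
  rw [iotaP, iotaM]
  module

end Paravector

theorem stmt4_general {n : ℕ}
    (Q : QuadraticForm ℝ (EuclideanSpace ℝ (Fin n)))
    (hQ : ∀ v : EuclideanSpace ℝ (Fin n), Q v = -‖v‖ ^ 2)
    (x : ℝ) (v : EuclideanSpace ℝ (Fin n)) (hv : v ≠ 0) :
    ((1 : ℂ) ⊗ₜ[ℝ] paravec Q x v) * iotaP Q v = sPlus x v • iotaP Q v ∧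
    ((1 : ℂ) ⊗ₜ[ℝ] paravec Q x v) * iotaM Q v = sMinus x v • iotaM Q v ∧
    (1 : ℂ) ⊗ₜ[ℝ] paravec Q x v = sPlus x v • iotaP Q v + sMinus x v • iotaM Q v ∧
    (∀ a : ℂ ⊗[ℝ] CliffordAlgebra Q,
      ((1 : ℂ) ⊗ₜ[ℝ] paravec Q x v) * (iotaP Q v * a) = sPlus x v • (iotaP Q v * a) ∧
      ((1 : ℂ) ⊗ₜ[ℝ] paravec Q x v) * (iotaM Q v * a) = sMinus x v • (iotaM Q v * a)) := by
  have hunit : Q (‖v‖⁻¹ • v) = -1 := by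
    rw [hQ, norm_smul, norm_inv, norm_norm, inv_mul_cancel₀ (norm_ne_zero_iff.mpr hv)]
    norm_num
  have he := CliffordAlgebra.one_tmul_ι_mul_self hunit
  have hplus : ((1 : ℂ) ⊗ₜ[ℝ] paravec Q x v) * iotaP Q v = sPlus x v • iotaP Q v := by
    rw [one_tmul_paravec Q x hv, iotaP_eq, mul_smul_comm,
      add_smul_mul_one_sub_smul_of_mul_self_eq_neg_one he Complex.I_mul_I, smul_comm, sPlus]
  have hminus : ((1 : ℂ) ⊗ₜ[ℝ] paravec Q x v) * iotaM Q v = sMinus x v • iotaM Q v := by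
    rw [one_tmul_paravec Q x hv, iotaM_eq, mul_smul_comm,
      add_smul_mul_one_sub_smul_of_mul_self_eq_neg_one he
        (by rw [neg_mul_neg, Complex.I_mul_I]), smul_comm, sMinus, mul_neg, ← sub_eq_add_neg]
  refine ⟨hplus, hminus, ?_, fun a => ⟨?_, ?_⟩⟩
  · rw [← hplus, ← hminus, ← mul_add, iotaP_add_iotaM, mul_one]
  · exact mul_mul_eq_smul_mul_of_mul_eq_smul hplus a
  · exact mul_mul_eq_smul_mul_of_mul_eq_smul hminus a

/-- `(1 ⊗ κ) ι±(κ) = s±(κ) • ι±(κ)`, the spectral decomposition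
`1 ⊗ κ = s₊(κ) • ι₊(κ) + s₋(κ) • ι₋(κ)`, and the eigenvector relations on `ι±(κ) * a`. -/
theorem stmt4 {n : ℕ} (hn : 1 ≤ n)
    (Q : QuadraticForm ℝ (EuclideanSpace ℝ (Fin n)))
    (hQ : ∀ v : EuclideanSpace ℝ (Fin n), Q v = -‖v‖ ^ 2)
    (x : ℝ) (v : EuclideanSpace ℝ (Fin n)) (hv : v ≠ 0) :
    ((1 : ℂ) ⊗ₜ[ℝ] paravec Q x v) * iotaP Q v = sPlus x v • iotaP Q v ∧
    ((1 : ℂ) ⊗ₜ[ℝ] paravec Q x v) * iotaM Q v = sMinus x v • iotaM Q v ∧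
    (1 : ℂ) ⊗ₜ[ℝ] paravec Q x v = sPlus x v • iotaP Q v + sMinus x v • iotaM Q v ∧
    (∀ a : ℂ ⊗[ℝ] CliffordAlgebra Q,
      ((1 : ℂ) ⊗ₜ[ℝ] paravec Q x v) * (iotaP Q v * a) = sPlus x v • (iotaP Q v * a) ∧
      ((1 : ℂ) ⊗ₜ[ℝ] paravec Q x v) * (iotaM Q v * a) = sMinus x v • (iotaM Q v * a)) :=
  stmt4_general Q hQ x v hv
end

section
/- Let U ⊆ ℂ be a conjugate symmetric set and let f : U → ℂ. The following are equivalent: (1) f(conj ζ) = conj (f(ζ)) for all ζ ∈ U; (2) for every unit vector u ∈ E (‖u‖ = 1) and all x, y ∈ ℝ such that the paravector κ = algebraMap x + ι(y • u) belongs to U_σ, there exist a, b ∈ ℝ with f_σ(κ) = 1 ⊗ₜ (algebraMap a + ι(b • u)) and f_σ(κ*) = 1 ⊗ₜ (algebraMap a − ι(b • u)), where κ* = algebraMap x − ι(y • u). -/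
open scoped TensorProduct

/-- The conjugation `χ` of the complexification `𝔎ₙ = ℂ ⊗[ℝ] 𝔠ₙ`, determined by
`χ(λ ⊗ a) = (conj λ) ⊗ a`. -/
noncomputable def chi {n : ℕ} (Q : QuadraticForm ℝ (EuclideanSpace ℝ (Fin n))) :
    (ℂ ⊗[ℝ] CliffordAlgebra Q) →ₐ[ℝ] ℂ ⊗[ℝ] CliffordAlgebra Q :=
  Algebra.TensorProduct.map Complex.conjAe.toAlgHom (AlgHom.id ℝ (CliffordAlgebra Q))

open Classical in
/-- The function `F_σ` induced on paravectors `(x, v)` by a `𝔎ₙ`-valued function `F`. -/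
noncomputable def Fsig {n : ℕ} (Q : QuadraticForm ℝ (EuclideanSpace ℝ (Fin n)))
    (F : ℂ → ℂ ⊗[ℝ] CliffordAlgebra Q) (x : ℝ) (v : EuclideanSpace ℝ (Fin n)) :
    ℂ ⊗[ℝ] CliffordAlgebra Q :=
  if v = 0 then F x
  else F (sPlus x v) * iotaP Q v + F (sMinus x v) * iotaM Q v

open Classical in
/-- The function `f_σ` induced on paravectors `(x, v)` by a complex-valued function `f`. -/
noncomputable def fsig {n : ℕ} (Q : QuadraticForm ℝ (EuclideanSpace ℝ (Fin n)))
    (f : ℂ → ℂ) (x : ℝ) (v : EuclideanSpace ℝ (Fin n)) :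
    ℂ ⊗[ℝ] CliffordAlgebra Q :=
  if v = 0 then f x • 1
  else f (sPlus x v) • iotaP Q v + f (sMinus x v) • iotaM Q v

/-!
Write `f_σ(x + v) = A ⊗ 1 + B ⊗ ι(‖v‖⁻¹ v)` with `A = (f s₊ + f s₋)/2` and
`B = i (f s₋ - f s₊)/2`; replacing `v` by `-v` fixes `s₊, s₋` and flips the sign of the vector
part. Since `1` and `ι u` are linearly independent over `ℝ` (the grade involution separates
them), and stay so over `ℂ` after base change, the condition on the slice through `u` says
exactly that `A` and `B` are real, i.e. `f s₋ = conj (f s₊)`. Every conjugate pair `{ζ, conj ζ}`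
arises as `{s₊, s₋}` on such a slice.
-/

namespace CliffordAlgebra

section CommRing

variable {R M : Type*} [CommRing R] [AddCommGroup M] [Module R M] (Q : QuadraticForm R M)

theorem one_tmul_algebraMap_add_ι_smul {S : Type*} [Semiring S] [Algebra R S] (a b : R) (u : M) :
    (1 : S) ⊗ₜ[R] (algebraMap R (CliffordAlgebra Q) a + ι Q (b • u)) =
      algebraMap R S a ⊗ₜ 1 + algebraMap R S b ⊗ₜ ι Q u := by
  rw [TensorProduct.tmul_add, map_smul, Algebra.algebraMap_eq_smul_one, TensorProduct.tmul_smul,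
    TensorProduct.tmul_smul, TensorProduct.smul_tmul', TensorProduct.smul_tmul',
    Algebra.smul_def, Algebra.smul_def, mul_one, mul_one]

theorem ι_ne_zero [Invertible (2 : R)] {u : M} (hu : u ≠ 0) : ι Q u ≠ 0 := by
  intro h
  have := congrArg (equivExterior Q) h
  simp [equivExterior, changeForm_ι] at this
  exact hu this

end CommRing

variable {K M : Type*} [Field K] [Invertible (2 : K)] [AddCommGroup M] [Module K M]
  (Q : QuadraticForm K M)

theorem linearIndependent_one_ι {u : M} (hu : u ≠ 0) :
    LinearIndependent K ![(1 : CliffordAlgebra Q), ι Q u] := by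
  refine LinearIndependent.pair_iff.2 fun s t hst => ?_
  have hinv : s • (1 : CliffordAlgebra Q) + -(t • ι Q u) = 0 := by
    simpa using congrArg involute hst
  have hs : (2 * s) • (1 : CliffordAlgebra Q) = 0 := by
    linear_combination (norm := module) hst + hinv
  have ht : (2 * t) • ι Q u = 0 := by
    linear_combination (norm := module) hst - hinv
  simp only [smul_eq_zero, one_ne_zero, ι_ne_zero Q hu, or_false, mul_eq_zero,
    (isUnit_of_invertible (2 : K)).ne_zero, false_or] at hs ht
  exact ⟨hs, ht⟩

theorem tmul_one_add_tmul_ι_inj {S : Type*} [Ring S] [Algebra K S] {u : M} (hu : u ≠ 0)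
    {c₀ c₁ d₀ d₁ : S} :
    c₀ ⊗ₜ[K] (1 : CliffordAlgebra Q) + c₁ ⊗ₜ ι Q u = d₀ ⊗ₜ 1 + d₁ ⊗ₜ ι Q u ↔
      c₀ = d₀ ∧ c₁ = d₁ := by
  have hli : LinearIndependent S ![(1 : S) ⊗ₜ[K] (1 : CliffordAlgebra Q), 1 ⊗ₜ ι Q u] := by
    convert Module.Flat.linearIndependent_one_tmul (S := S) (linearIndependent_one_ι Q hu) using 1
    ext i; fin_cases i <;> rfl
  have htmul (c : S) (w : CliffordAlgebra Q) : c ⊗ₜ[K] w = c • ((1 : S) ⊗ₜ w) := by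
    rw [TensorProduct.smul_tmul', smul_eq_mul, mul_one]
  refine ⟨fun h => hli.eq_of_pair ?_, fun ⟨h₀, h₁⟩ => h₀ ▸ h₁ ▸ rfl⟩
  rwa [htmul c₀, htmul c₁, htmul d₀, htmul d₁] at h

end CliffordAlgebra
theorem Complex.eq_conj_iff_im_add_eq_zero_and_re_sub_eq_zero {z w : ℂ} :
    w = starRingEnd ℂ z ↔ (z + w).im = 0 ∧ (w - z).re = 0 := by
  simp only [Complex.ext_iff, Complex.conj_re, Complex.conj_im, Complex.add_im, Complex.sub_re]
  constructor <;> rintro ⟨h₁, h₂⟩ <;> constructor <;> linarith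

section Paravector

variable {n : ℕ}

@[simp] lemma sPlus_neg (x : ℝ) (v : EuclideanSpace ℝ (Fin n)) : sPlus x (-v) = sPlus x v := by
  simp [sPlus]

@[simp] lemma sMinus_neg (x : ℝ) (v : EuclideanSpace ℝ (Fin n)) : sMinus x (-v) = sMinus x v := by
  simp [sMinus]

@[simp] lemma sPlus_zero (x : ℝ) : sPlus x (0 : EuclideanSpace ℝ (Fin n)) = x := by
  simp [sPlus]

@[simp] lemma sMinus_zero (x : ℝ) : sMinus x (0 : EuclideanSpace ℝ (Fin n)) = x := by
  simp [sMinus]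

lemma sMinus_eq_conj_sPlus (x : ℝ) (v : EuclideanSpace ℝ (Fin n)) :
    sMinus x v = starRingEnd ℂ (sPlus x v) := by
  simp [sPlus, sMinus, sub_eq_add_neg]

lemma sPlus_sMinus_re_im_smul {u : EuclideanSpace ℝ (Fin n)} (hu : ‖u‖ = 1) (ζ : ℂ) :
    (sPlus ζ.re (ζ.im • u) = ζ ∧ sMinus ζ.re (ζ.im • u) = starRingEnd ℂ ζ) ∨
      (sPlus ζ.re (ζ.im • u) = starRingEnd ℂ ζ ∧ sMinus ζ.re (ζ.im • u) = ζ) := by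
  have hnorm : ‖ζ.im • u‖ = |ζ.im| := by rw [norm_smul, hu, mul_one, Real.norm_eq_abs]
  simp only [sMinus_eq_conj_sPlus]
  rcases abs_choice ζ.im with h | h
  · left; simp [sPlus, hnorm, h]
  · right; simp [sPlus, hnorm, h, Complex.ext_iff]

variable (Q : QuadraticForm ℝ (EuclideanSpace ℝ (Fin n))) (f : ℂ → ℂ)

-- This holds also at `v = 0`, where `s₊ = s₋ = x` and `‖0‖⁻¹ • 0 = 0`.
theorem fsig_eq_tmul (x : ℝ) (v : EuclideanSpace ℝ (Fin n)) :
    fsig Q f x v =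
      ((f (sPlus x v) + f (sMinus x v)) / 2) ⊗ₜ[ℝ] (1 : CliffordAlgebra Q) +
        ((f (sMinus x v) - f (sPlus x v)) * Complex.I / 2) ⊗ₜ CliffordAlgebra.ι Q (‖v‖⁻¹ • v) := by
  by_cases hv : v = 0
  · subst hv
    simp [fsig, Algebra.TensorProduct.one_def, TensorProduct.smul_tmul']
  · have htmul (c : ℂ) (w : CliffordAlgebra Q) : c ⊗ₜ[ℝ] w = c • ((1 : ℂ) ⊗ₜ w) := by
      rw [TensorProduct.smul_tmul', smul_eq_mul, mul_one]
    rw [htmul ((f (sPlus x v) + f (sMinus x v)) / 2),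
      htmul ((f (sMinus x v) - f (sPlus x v)) * Complex.I / 2), ← Algebra.TensorProduct.one_def,
      fsig, if_neg hv, iotaP, iotaM]
    module

theorem exists_fsig_eq_slice_iff {u : EuclideanSpace ℝ (Fin n)} (hu : ‖u‖ = 1) (x y : ℝ) :
    (∃ a b : ℝ,
        fsig Q f x (y • u) = (1 : ℂ) ⊗ₜ[ℝ]
          (algebraMap ℝ (CliffordAlgebra Q) a + CliffordAlgebra.ι Q (b • u)) ∧
        fsig Q f x (-(y • u)) = (1 : ℂ) ⊗ₜ[ℝ]
          (algebraMap ℝ (CliffordAlgebra Q) a - CliffordAlgebra.ι Q (b • u))) ↔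
      f (sMinus x (y • u)) = starRingEnd ℂ (f (sPlus x (y • u))) := by
  have hu0 : u ≠ 0 := by rintro rfl; simp at hu
  set t : ℝ := |y|⁻¹ * y
  have hdir : ‖y • u‖⁻¹ • (y • u) = t • u := by
    rw [norm_smul, hu, mul_one, Real.norm_eq_abs, smul_smul]
  have hdir_neg : ‖-(y • u)‖⁻¹ • -(y • u) = (-t) • u := by rw [norm_neg, smul_neg, hdir, neg_smul]
  have hsmul (s : ℝ) (c : ℂ) :
      c ⊗ₜ[ℝ] CliffordAlgebra.ι Q (s • u) = (s * c) ⊗ₜ CliffordAlgebra.ι Q u := by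
    rw [map_smul, TensorProduct.tmul_smul, TensorProduct.smul_tmul', Complex.real_smul]
  have hminus (a b : ℝ) : algebraMap ℝ (CliffordAlgebra Q) a - CliffordAlgebra.ι Q (b • u) =
      algebraMap ℝ (CliffordAlgebra Q) a + CliffordAlgebra.ι Q ((-b) • u) := by
    rw [sub_eq_add_neg, ← map_neg, ← neg_smul]
  have hreal (c : ℂ) : (∃ r : ℝ, c = r) ↔ c.im = 0 := by
    rw [← Complex.conj_eq_iff_real, Complex.conj_eq_iff_im]
  simp only [fsig_eq_tmul, hdir, hdir_neg, sPlus_neg, sMinus_neg, hminus,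
    CliffordAlgebra.one_tmul_algebraMap_add_ι_smul, Complex.coe_algebraMap, hsmul,
    CliffordAlgebra.tmul_one_add_tmul_ι_inj Q hu0]
  simp only [Complex.ofReal_neg, neg_mul, neg_inj, and_self, exists_and_left, exists_and_right,
    hreal, Complex.eq_conj_iff_im_add_eq_zero_and_re_sub_eq_zero, Complex.im_ofReal_mul,
    Complex.div_ofNat_im, Complex.mul_I_im]
  rcases eq_or_ne y 0 with rfl | hy
  · simp
  · have ht : t ≠ 0 := mul_ne_zero (inv_ne_zero (abs_ne_zero.2 hy)) hy
    simp [ht]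

end Paravector

theorem stmt8_general {n : ℕ} (hn : 1 ≤ n)
    (Q : QuadraticForm ℝ (EuclideanSpace ℝ (Fin n)))
    (U : Set ℂ) (hU : ∀ ζ : ℂ, ζ ∈ U ↔ (starRingEnd ℂ) ζ ∈ U)
    (f : ℂ → ℂ) :
    (∀ ζ ∈ U, f ((starRingEnd ℂ) ζ) = (starRingEnd ℂ) (f ζ)) ↔
      (∀ u : EuclideanSpace ℝ (Fin n), ‖u‖ = 1 → ∀ x y : ℝ,
        sPlus x (y • u) ∈ U → sMinus x (y • u) ∈ U →
        ∃ a b : ℝ,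
          fsig Q f x (y • u)
            = (1 : ℂ) ⊗ₜ[ℝ]
                (algebraMap ℝ (CliffordAlgebra Q) a + CliffordAlgebra.ι Q (b • u)) ∧
          fsig Q f x (-(y • u))
            = (1 : ℂ) ⊗ₜ[ℝ]
                (algebraMap ℝ (CliffordAlgebra Q) a - CliffordAlgebra.ι Q (b • u))) := by
  refine ⟨fun h u hu x y hplus _ => ?_, fun h ζ hζ => ?_⟩
  · rw [exists_fsig_eq_slice_iff Q f hu, sMinus_eq_conj_sPlus]
    exact h _ hplus
  · obtain ⟨u, hu⟩ : ∃ u : EuclideanSpace ℝ (Fin n), ‖u‖ = 1 :=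
      ⟨EuclideanSpace.single ⟨0, hn⟩ 1, by simp⟩
    have hconj := (hU ζ).1 hζ
    have hslice := h u hu ζ.re ζ.im
    rw [exists_fsig_eq_slice_iff Q f hu] at hslice
    rcases sPlus_sMinus_re_im_smul hu ζ with ⟨hplus, hminus⟩ | ⟨hplus, hminus⟩ <;>
      rw [hplus, hminus] at hslice
    · exact hslice hζ hconj
    · rw [hslice hconj hζ, Complex.conj_conj]

/-- a complex function `f` on a conjugate symmetric set `U` is a stem function
iff on each slice `ℂ_u` (`u` a unit vector) the induced function `f_σ` takes values in the
embedded slice `1 ⊗ ℂ_u` and intertwines the Clifford conjugation (`intrinsic functions`). -/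
theorem stmt8 {n : ℕ} (hn : 1 ≤ n)
    (Q : QuadraticForm ℝ (EuclideanSpace ℝ (Fin n)))
    (hQ : ∀ v : EuclideanSpace ℝ (Fin n), Q v = -‖v‖ ^ 2)
    (U : Set ℂ) (hU : ∀ ζ : ℂ, ζ ∈ U ↔ (starRingEnd ℂ) ζ ∈ U)
    (f : ℂ → ℂ) :
    (∀ ζ ∈ U, f ((starRingEnd ℂ) ζ) = (starRingEnd ℂ) (f ζ)) ↔
      (∀ u : EuclideanSpace ℝ (Fin n), ‖u‖ = 1 → ∀ x y : ℝ,
        sPlus x (y • u) ∈ U → sMinus x (y • u) ∈ U →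
        ∃ a b : ℝ,
          fsig Q f x (y • u)
            = (1 : ℂ) ⊗ₜ[ℝ]
                (algebraMap ℝ (CliffordAlgebra Q) a + CliffordAlgebra.ι Q (b • u)) ∧
          fsig Q f x (-(y • u))
            = (1 : ℂ) ⊗ₜ[ℝ]
                (algebraMap ℝ (CliffordAlgebra Q) a - CliffordAlgebra.ι Q (b • u))) :=
  stmt8_general hn Q U hU f
end

section
/- Let U ⊆ ℂ be a conjugate symmetric set, F : U → 𝔎ₙ and f, g : U → ℂ any functions. Define (F·f) : U → 𝔎ₙ by (F·f)(ζ) = f(ζ) • F(ζ). Then for every κ ∈ U_σ: (F·f)_σ(κ) = F_σ(κ) * f_σ(κ); in particular (f·g)_σ(κ) = f_σ(κ) * g_σ(κ) = g_σ(κ) * f_σ(κ), where (f·g)(ζ) = f(ζ)g(ζ). -/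
open scoped TensorProduct

/-! Since `𝔰_κ² = -1`, the element `t = i 𝔰_κ` is an involution, so `ι₊ = (1 - t)/2` and
`ι₋ = (1 + t)/2` are orthogonal idempotents. Products of combinations `X ι₊ + Y ι₋` with
scalar combinations `c ι₊ + d ι₋` are therefore computed coefficientwise, and the scalar
case is the special case `F = f • 1`. -/

section Involution

variable {K A : Type*} [Field K] [Ring A] [Algebra K A] {t : A}

theorem isIdempotentElem_half_smul_one_sub [NeZero (2 : K)] (ht : t * t = 1) :
    IsIdempotentElem ((1/2 : K) • (1 - t)) := by
  have h : (1 - t) * (1 - t) = (2 : K) • (1 - t) := by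
    rw [two_smul]; noncomm_ring; rw [ht]; abel
  rw [IsIdempotentElem, smul_mul_smul_comm, h, smul_smul]
  congr 1
  field_simp

theorem isIdempotentElem_half_smul_one_add [NeZero (2 : K)] (ht : t * t = 1) :
    IsIdempotentElem ((1/2 : K) • (1 + t)) := by
  simpa using isIdempotentElem_half_smul_one_sub (K := K) (t := -t) (by simpa using ht)

theorem half_smul_one_sub_mul_half_smul_one_add (ht : t * t = 1) :
    (1/2 : K) • (1 - t) * (1/2 : K) • (1 + t) = 0 := by
  rw [smul_mul_smul_comm]; noncomm_ring; simp [ht]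

theorem half_smul_one_add_mul_half_smul_one_sub (ht : t * t = 1) :
    (1/2 : K) • (1 + t) * (1/2 : K) • (1 - t) = 0 := by
  rw [smul_mul_smul_comm]; noncomm_ring; simp [ht]

end Involution

theorem mul_smul_add_smul_of_orthogonal {R A : Type*} [CommSemiring R] [Semiring A] [Algebra R A]
    {p q : A} (hp : IsIdempotentElem p) (hq : IsIdempotentElem q) (hpq : p * q = 0)
    (hqp : q * p = 0) (X Y : A) (c d : R) :
    (X * p + Y * q) * (c • p + d • q) = (c • X) * p + (d • Y) * q := by
  simp only [mul_add, add_mul, mul_smul_comm, smul_mul_assoc, mul_assoc, hp.eq, hq.eq, hpq, hqp,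
    mul_zero, add_zero, zero_add]

theorem I_smul_one_tmul_mul_self {A : Type*} [Ring A] [Algebra ℝ A] {a : A} (ha : a * a = -1) :
    (Complex.I • ((1 : ℂ) ⊗ₜ[ℝ] a)) * (Complex.I • ((1 : ℂ) ⊗ₜ[ℝ] a)) = 1 := by
  rw [smul_mul_smul_comm, Complex.I_mul_I, Algebra.TensorProduct.tmul_mul_tmul, ha, one_mul,
    TensorProduct.tmul_neg, neg_one_smul, neg_neg, Algebra.TensorProduct.one_def]

section Paravector

variable {n : ℕ} {Q : QuadraticForm ℝ (EuclideanSpace ℝ (Fin n))}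

theorem ι_normalize_mul_self (hQ : ∀ v, Q v = -‖v‖ ^ 2) {v : EuclideanSpace ℝ (Fin n)}
    (hv : v ≠ 0) :
    CliffordAlgebra.ι Q (‖v‖⁻¹ • v) * CliffordAlgebra.ι Q (‖v‖⁻¹ • v) = -1 := by
  rw [CliffordAlgebra.ι_sq_scalar, hQ, norm_smul, norm_inv, norm_norm,
    inv_mul_cancel₀ (norm_ne_zero_iff.mpr hv)]
  simp

theorem fsig_eq_Fsig_smul_one (f : ℂ → ℂ) : fsig Q f = Fsig Q (fun ζ => f ζ • 1) := by
  ext x v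
  simp only [fsig, Fsig, smul_one_mul]

variable (hQ : ∀ v, Q v = -‖v‖ ^ 2) {v : EuclideanSpace ℝ (Fin n)}
include hQ

theorem isIdempotentElem_iotaP (hv : v ≠ 0) : IsIdempotentElem (iotaP Q v) :=
  isIdempotentElem_half_smul_one_sub (I_smul_one_tmul_mul_self (ι_normalize_mul_self hQ hv))

theorem isIdempotentElem_iotaM (hv : v ≠ 0) : IsIdempotentElem (iotaM Q v) :=
  isIdempotentElem_half_smul_one_add (I_smul_one_tmul_mul_self (ι_normalize_mul_self hQ hv))

theorem iotaP_mul_iotaM (hv : v ≠ 0) : iotaP Q v * iotaM Q v = 0 :=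
  half_smul_one_sub_mul_half_smul_one_add (I_smul_one_tmul_mul_self (ι_normalize_mul_self hQ hv))

theorem iotaM_mul_iotaP (hv : v ≠ 0) : iotaM Q v * iotaP Q v = 0 :=
  half_smul_one_add_mul_half_smul_one_sub (I_smul_one_tmul_mul_self (ι_normalize_mul_self hQ hv))

theorem Fsig_smul (F : ℂ → ℂ ⊗[ℝ] CliffordAlgebra Q) (f : ℂ → ℂ) (x : ℝ) :
    Fsig Q (fun ζ => f ζ • F ζ) x v = Fsig Q F x v * fsig Q f x v := by
  by_cases hv : v = 0
  · simp only [Fsig, fsig, if_pos hv, mul_smul_one]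
  · simp only [Fsig, fsig, if_neg hv]
    exact (mul_smul_add_smul_of_orthogonal (isIdempotentElem_iotaP hQ hv)
      (isIdempotentElem_iotaM hQ hv) (iotaP_mul_iotaM hQ hv) (iotaM_mul_iotaP hQ hv) _ _ _ _).symm

theorem fsig_mul (f g : ℂ → ℂ) (x : ℝ) :
    fsig Q (fun ζ => f ζ * g ζ) x v = fsig Q f x v * fsig Q g x v := by
  have hfg : (fun ζ => (f ζ * g ζ) • (1 : ℂ ⊗[ℝ] CliffordAlgebra Q)) =
      fun ζ => g ζ • f ζ • 1 := by
    ext ζ; rw [smul_smul, mul_comm]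
  rw [fsig_eq_Fsig_smul_one, hfg, Fsig_smul hQ, ← fsig_eq_Fsig_smul_one]

theorem fsig_mul_comm (f g : ℂ → ℂ) (x : ℝ) :
    fsig Q f x v * fsig Q g x v = fsig Q g x v * fsig Q f x v := by
  simp only [← fsig_mul hQ, mul_comm]

end Paravector

theorem stmt11_general {n : ℕ}
    (Q : QuadraticForm ℝ (EuclideanSpace ℝ (Fin n)))
    (hQ : ∀ v : EuclideanSpace ℝ (Fin n), Q v = -‖v‖ ^ 2)
    (U : Set ℂ)
    (F : ℂ → ℂ ⊗[ℝ] CliffordAlgebra Q) (f g : ℂ → ℂ) :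
    ∀ (x : ℝ) (v : EuclideanSpace ℝ (Fin n)), sPlus x v ∈ U → sMinus x v ∈ U →
      Fsig Q (fun ζ => f ζ • F ζ) x v = Fsig Q F x v * fsig Q f x v ∧
      fsig Q (fun ζ => f ζ * g ζ) x v = fsig Q f x v * fsig Q g x v ∧
      fsig Q f x v * fsig Q g x v = fsig Q g x v * fsig Q f x v :=
  fun x _ _ _ => ⟨Fsig_smul hQ F f x, fsig_mul hQ f g x, fsig_mul_comm hQ f g x⟩

/-- `(F·f)_σ(κ) = F_σ(κ) * f_σ(κ)` on `U_σ`, where `(F·f)(ζ) = f(ζ) • F(ζ)`;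
in particular `(f·g)_σ = f_σ * g_σ = g_σ * f_σ`. -/
theorem stmt11 {n : ℕ} (hn : 1 ≤ n)
    (Q : QuadraticForm ℝ (EuclideanSpace ℝ (Fin n)))
    (hQ : ∀ v : EuclideanSpace ℝ (Fin n), Q v = -‖v‖ ^ 2)
    (U : Set ℂ) (hU : ∀ ζ : ℂ, ζ ∈ U ↔ (starRingEnd ℂ) ζ ∈ U)
    (F : ℂ → ℂ ⊗[ℝ] CliffordAlgebra Q) (f g : ℂ → ℂ) :
    ∀ (x : ℝ) (v : EuclideanSpace ℝ (Fin n)), sPlus x v ∈ U → sMinus x v ∈ U →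
      Fsig Q (fun ζ => f ζ • F ζ) x v = Fsig Q F x v * fsig Q f x v ∧
      fsig Q (fun ζ => f ζ * g ζ) x v = fsig Q f x v * fsig Q g x v ∧
      fsig Q f x v * fsig Q g x v = fsig Q g x v * fsig Q f x v :=
  stmt11_general Q hQ U F f g
end

section
/- If Ω ⊆ ℝ × E is a spectrally saturated open set, then 𝔖(Ω) is open in ℂ. Conversely, if U ⊆ ℂ is an open conjugate symmetric set, then U_σ is open in ℝ × E (and it is spectrally saturated). -/
/-- The spectrum `σ((x, v)) = {x + i‖v‖, x - i‖v‖}` of a paravector `(x, v) ∈ ℝ × E`. -/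
noncomputable def pvSpec {n : ℕ} (p : ℝ × EuclideanSpace ℝ (Fin n)) : Set ℂ :=
  {(p.1 : ℂ) + ‖p.2‖ * Complex.I, (p.1 : ℂ) - ‖p.2‖ * Complex.I}

/-- `S_σ`: the set of paravectors whose spectrum is contained in `S ⊆ ℂ`. -/
noncomputable def setSigma {n : ℕ} (S : Set ℂ) : Set (ℝ × EuclideanSpace ℝ (Fin n)) :=
  {p | pvSpec p ⊆ S}

/-- `𝔖(Ω) = ⋃_{κ ∈ Ω} σ(κ)`. -/
noncomputable def specUnion {n : ℕ} (Ω : Set (ℝ × EuclideanSpace ℝ (Fin n))) : Set ℂ :=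
  ⋃ p ∈ Ω, pvSpec p

/-- `Ω` is spectrally saturated. -/
def SpecSat {n : ℕ} (Ω : Set (ℝ × EuclideanSpace ℝ (Fin n))) : Prop :=
  ∀ p q : ℝ × EuclideanSpace ℝ (Fin n), p ∈ Ω → pvSpec q = pvSpec p → q ∈ Ω

/-- `S ⊆ ℂ` is conjugate symmetric. -/
def ConjSymm (S : Set ℂ) : Prop := ∀ ζ : ℂ, ζ ∈ S ↔ (starRingEnd ℂ) ζ ∈ S

/-!
The spectrum `σ(x, v)` depends only on `(x, ‖v‖)`, and `z ∈ σ(x, v)` exactly when `Re z = x`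
and `|Im z| = ‖v‖`. Hence, for a unit vector `e`, the continuous map `z ↦ (Re z, |Im z| e)`
pulls a spectrally saturated `Ω` back to `𝔖(Ω)`.
Conversely `U_σ` is the intersection of the preimages of `U` under the two continuous
eigenvalue maps `(x, v) ↦ x ± i‖v‖`.
-/

open Complex

lemma pvSpec_eq_of_fst_eq_of_norm_eq {n : ℕ} {p q : ℝ × EuclideanSpace ℝ (Fin n)}
    (h₁ : p.1 = q.1) (h₂ : ‖p.2‖ = ‖q.2‖) : pvSpec p = pvSpec q := by
  simp [pvSpec, h₁, h₂]

lemma mem_pvSpec_iff {n : ℕ} {p : ℝ × EuclideanSpace ℝ (Fin n)} {z : ℂ} :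
    z ∈ pvSpec p ↔ z.re = p.1 ∧ |z.im| = ‖p.2‖ := by
  constructor
  · rintro (rfl | rfl) <;> simp [abs_of_nonneg (norm_nonneg _)]
  · rintro ⟨hre, him⟩
    rcases abs_choice z.im with h | h
    · exact .inl (Complex.ext (by simp [hre]) (by simp [← him, h]))
    · exact .inr (Complex.ext (by simp [hre]) (by simp [← him, h]))

section Lift

variable {n : ℕ} {e : EuclideanSpace ℝ (Fin n)}

noncomputable def pvLift (e : EuclideanSpace ℝ (Fin n)) (z : ℂ) : ℝ × EuclideanSpace ℝ (Fin n) :=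
  (z.re, |z.im| • e)

lemma continuous_pvLift (e : EuclideanSpace ℝ (Fin n)) : Continuous (pvLift e) := by
  unfold pvLift
  fun_prop

lemma mem_pvSpec_pvLift (he : ‖e‖ = 1) (z : ℂ) : z ∈ pvSpec (pvLift e z) :=
  mem_pvSpec_iff.2 ⟨rfl, by simp [pvLift, norm_smul, he]⟩

lemma specUnion_eq_preimage_pvLift {Ω : Set (ℝ × EuclideanSpace ℝ (Fin n))} (hΩ : SpecSat Ω)
    (he : ‖e‖ = 1) : specUnion Ω = pvLift e ⁻¹' Ω := by
  ext z
  simp only [specUnion, Set.mem_iUnion, exists_prop, Set.mem_preimage]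
  constructor
  · rintro ⟨p, hp, hz⟩
    obtain ⟨hre, him⟩ := mem_pvSpec_iff.1 hz
    obtain ⟨-, him'⟩ := mem_pvSpec_iff.1 (mem_pvSpec_pvLift he z)
    exact hΩ p _ hp (pvSpec_eq_of_fst_eq_of_norm_eq hre (him'.symm.trans him))
  · exact fun hz => ⟨_, hz, mem_pvSpec_pvLift he z⟩

end Lift

lemma IsOpen.specUnion {n : ℕ} [NeZero n] {Ω : Set (ℝ × EuclideanSpace ℝ (Fin n))}
    (hΩ : IsOpen Ω) (hsat : SpecSat Ω) : IsOpen (specUnion Ω) := by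
  obtain ⟨e, he⟩ := exists_norm_eq (EuclideanSpace ℝ (Fin n)) zero_le_one
  rw [specUnion_eq_preimage_pvLift hsat he]
  exact hΩ.preimage (continuous_pvLift e)

lemma setSigma_eq_preimage_inter_preimage {n : ℕ} (U : Set ℂ) :
    setSigma (n := n) U =
      (fun p => (p.1 : ℂ) + ‖p.2‖ * I) ⁻¹' U ∩ (fun p => (p.1 : ℂ) - ‖p.2‖ * I) ⁻¹' U := by
  ext p
  simp [setSigma, pvSpec, Set.insert_subset_iff]

lemma IsOpen.setSigma {n : ℕ} {U : Set ℂ} (hU : IsOpen U) : IsOpen (setSigma (n := n) U) := by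
  rw [setSigma_eq_preimage_inter_preimage]
  exact (hU.preimage (by fun_prop)).inter (hU.preimage (by fun_prop))

lemma specSat_setSigma {n : ℕ} (U : Set ℂ) : SpecSat (setSigma (n := n) U) :=
  fun _ _ hp hq => show pvSpec _ ⊆ U from hq ▸ hp

/-- `Ω` spectrally saturated open implies `𝔖(Ω)` open; `U` open conjugate
symmetric implies `U_σ` open (and spectrally saturated). -/
theorem stmt15 {n : ℕ} (hn : 1 ≤ n) :
    (∀ Ω : Set (ℝ × EuclideanSpace ℝ (Fin n)), IsOpen Ω → SpecSat Ω →
      IsOpen (specUnion Ω)) ∧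
    (∀ U : Set ℂ, IsOpen U → ConjSymm U →
      IsOpen (setSigma (n := n) U) ∧ SpecSat (setSigma (n := n) U)) := by
  have : NeZero n := ⟨by omega⟩
  exact ⟨fun Ω hΩ hsat => hΩ.specUnion hsat,
    fun U hU _ => ⟨hU.setSigma, specSat_setSigma U⟩⟩
end

section
/- Let X be a complex Banach space, C a conjugation on X, and T : X →L[ℂ] X a bounded operator with T♭ = T. Let c ∈ ℝ and R > 0 be such that for every ζ ∈ ℂ with |ζ − c| = R the operator ζ • 1 − T is invertible in B(X), and let F : ℂ → (X →L[ℂ] X) be continuous on the circle {ζ : |ζ − c| = R} and satisfy F(conj ζ) = F(ζ)♭ for every ζ on this circle. Then the operator G := (2πi)⁻¹ • ∮_{ζ ∈ circle(c, R)} F(ζ) ∘ (ζ • 1 − T)⁻¹ dζ (a circle integral in the Banach space of bounded operators on X) satisfies G♭ = G; equivalently, C (G (C x)) = G x for every x ∈ X, so G leaves invariant the real subspace of C-fixed points. -/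
/-!
Conjugation by `C` is a continuous conjugate-linear ring automorphism `S ↦ S♭` of the operator
algebra, so it commutes with `Ring.inverse` and, by the symmetry assumptions on `T` and `F`,
sends the integrand at `ζ` to the integrand at `conj ζ`. Complex conjugation maps the circle
around the real point `c` onto itself, reversing its orientation; the resulting sign cancels
against `conj (2πi)⁻¹ = -(2πi)⁻¹`.
-/

open MeasureTheory Complex Metric ComplexConjugate

theorem ContinuousLinearMap.intervalIntegral_comp_commSL {𝕜 𝕜' E F : Type*} [RCLike 𝕜]
    [RCLike 𝕜']
    [NormedAddCommGroup E] [NormedSpace 𝕜 E] [NormedSpace ℝ E] [CompleteSpace E]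
    [NormedAddCommGroup F] [NormedSpace 𝕜' F] [NormedSpace ℝ F] [CompleteSpace F]
    {σ : 𝕜 →+* 𝕜'} [RingHomIsometric σ] (hσ : ∀ (r : ℝ) (x : 𝕜), σ (r • x) = r • σ x)
    (L : E →SL[σ] F) {f : ℝ → E} {μ : Measure ℝ} {a b : ℝ} (hf : IntervalIntegrable f μ a b) :
    ∫ x in a..b, L (f x) ∂μ = L (∫ x in a..b, f x ∂μ) := by
  simp_rw [intervalIntegral, L.integral_comp_commSL hσ hf.1, L.integral_comp_commSL hσ hf.2,
    L.map_sub]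

theorem Function.Periodic.intervalIntegral_comp_neg {E : Type*} [NormedAddCommGroup E]
    [NormedSpace ℝ E] {g : ℝ → E} {T : ℝ} (hg : Function.Periodic g T) :
    ∫ θ in (0 : ℝ)..T, g (-θ) = ∫ θ in (0 : ℝ)..T, g θ := by
  rw [intervalIntegral.integral_comp_neg, neg_zero]
  simpa using hg.intervalIntegral_add_eq (-T) 0

-- Conjugation maps `C(c, R)` onto `C(conj c, R)` with the orientation reversed.
theorem ContinuousLinearMap.conjLinear_map_circleIntegral {E F : Type*}
    [NormedAddCommGroup E] [NormedSpace ℂ E] [CompleteSpace E]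
    [NormedAddCommGroup F] [NormedSpace ℂ F] [CompleteSpace F]
    (L : E →L⋆[ℂ] F) {f : ℂ → E} {c : ℂ} {R : ℝ} (hf : CircleIntegrable f c R) :
    L (∮ z in C(c, R), f z) = -∮ z in C(conj c, R), L (f (conj z)) := by
  have hper : Function.Periodic
      (fun θ => L (deriv (circleMap c R) θ • f (circleMap c R θ))) (2 * Real.pi) := by
    intro θ
    simp only [deriv_circleMap, periodic_circleMap _ R θ]
  rw [circleIntegral, circleIntegral, ← L.intervalIntegral_comp_commSL RCLike.conj_smul hf.out,
    ← intervalIntegral.integral_neg, ← hper.intervalIntegral_comp_neg]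
  congr 1 with θ
  simp [deriv_circleMap, conj_circleMap]

theorem map_ringInverse {F M₀ N₀ : Type*} [MonoidWithZero M₀] [MonoidWithZero N₀]
    [EquivLike F M₀ N₀] [MulEquivClass F M₀ N₀] (e : F) (a : M₀) :
    e (Ring.inverse a) = Ring.inverse (e a) := by
  by_cases ha : IsUnit a
  · lift a to M₀ˣ using ha
    have hea : e a = ((Units.map (e : M₀ →* N₀) a : N₀ˣ) : N₀) := rfl
    rw [hea, Ring.inverse_unit, Ring.inverse_unit, ← map_inv (Units.map (e : M₀ →* N₀))]
    rfl
  · rw [Ring.inverse_non_unit a ha, Ring.inverse_non_unit _ (by rwa [MulEquiv.isUnit_map]),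
      map_zero]

theorem continuousOn_ringInverse_smul_one_sub {𝕜 A : Type*} [NontriviallyNormedField 𝕜]
    [NormedRing A] [NormedAlgebra 𝕜 A] [CompleteSpace A] (a : A) {s : Set 𝕜}
    (hs : ∀ z ∈ s, IsUnit (z • (1 : A) - a)) :
    ContinuousOn (fun z : 𝕜 => Ring.inverse (z • (1 : A) - a)) s := by
  have hresolvent : (fun z : 𝕜 => Ring.inverse (z • (1 : A) - a)) = resolvent a := by
    ext z; rw [resolvent, Algebra.algebraMap_eq_smul_one]
  rw [hresolvent]
  intro z hz
  refine (spectrum.hasDerivAt_resolvent_const_left ?_).continuousAt.continuousWithinAt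
  rw [spectrum.mem_resolventSet_iff, Algebra.algebraMap_eq_smul_one]
  exact hs z hz

namespace ContinuousLinearMap

variable {X : Type*} [NormedAddCommGroup X] [NormedSpace ℂ X] (C : X →L⋆[ℂ] X)

noncomputable def flat : (X →L[ℂ] X) →L⋆[ℂ] (X →L[ℂ] X) :=
  LinearMap.mkContinuous
    { toFun := fun S => C.comp (S.comp C)
      map_add' := fun S T => by ext; simp
      map_smul' := fun a S => by ext; simp }
    (‖C‖ * ‖C‖) fun S => by
      calc ‖C.comp (S.comp C)‖ ≤ ‖C‖ * (‖S‖ * ‖C‖) :=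
            (opNorm_comp_le _ _).trans (by gcongr; exact opNorm_comp_le _ _)
        _ = ‖C‖ * ‖C‖ * ‖S‖ := by ring

@[simp]
theorem flat_apply (S : X →L[ℂ] X) (x : X) : C.flat S x = C (S (C x)) := rfl

variable {C}

theorem flat_mul (hC : Function.Involutive C) (S T : X →L[ℂ] X) :
    C.flat (S * T) = C.flat S * C.flat T := by
  ext x; simp [hC _]

theorem flat_one (hC : Function.Involutive C) : C.flat 1 = 1 := by
  ext x; simp [hC _]

theorem flat_flat (hC : Function.Involutive C) (S : X →L[ℂ] X) :
    C.flat (C.flat S) = S := by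
  ext x; simp [hC _]

theorem flat_ringInverse (hC : Function.Involutive C) (S : X →L[ℂ] X) :
    C.flat (Ring.inverse S) = Ring.inverse (C.flat S) :=
  map_ringInverse
    ({ toFun := C.flat, invFun := C.flat, left_inv := flat_flat hC, right_inv := flat_flat hC,
       map_mul' := flat_mul hC } : (X →L[ℂ] X) ≃* (X →L[ℂ] X)) S

end ContinuousLinearMap

/-- if a conjugation `C` on a complex Banach space `X` fixes `T` (i.e.
`T♭ = T`), the circle `|ζ - c| = R` (with real center `c`) lies in the resolvent set of
`T`, and `F` is continuous on this circle and satisfies `F(conj ζ) = F(ζ)♭` there, then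
the contour integral `G = (2πi)⁻¹ ∮ F(ζ)(ζ - T)⁻¹ dζ` satisfies `G♭ = G`, i.e.
`C (G (C x)) = G x` for every `x`. -/
theorem stmt19 (X : Type*) [NormedAddCommGroup X] [NormedSpace ℂ X] [CompleteSpace X]
    (C : X → X) (hC_cont : Continuous C)
    (hC_add : ∀ x y : X, C (x + y) = C x + C y)
    (hC_smul : ∀ (lam : ℂ) (x : X), C (lam • x) = (starRingEnd ℂ) lam • C x)
    (hC_inv : ∀ x : X, C (C x) = x)
    (T : X →L[ℂ] X) (hT : ∀ x : X, C (T (C x)) = T x)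
    (c : ℝ) (R : ℝ) (hR : 0 < R)
    (hres : ∀ ζ ∈ Metric.sphere (c : ℂ) R, IsUnit (ζ • (1 : X →L[ℂ] X) - T))
    (F : ℂ → X →L[ℂ] X) (hFcont : ContinuousOn F (Metric.sphere (c : ℂ) R))
    (hFstem : ∀ ζ ∈ Metric.sphere (c : ℂ) R, ∀ x : X,
      F ((starRingEnd ℂ) ζ) x = C (F ζ (C x))) :
    ∀ x : X,
      C (((2 * (Real.pi : ℂ) * Complex.I)⁻¹ •
          circleIntegral
            (fun ζ : ℂ => F ζ * Ring.inverse (ζ • (1 : X →L[ℂ] X) - T)) (c : ℂ) R) (C x))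
        = ((2 * (Real.pi : ℂ) * Complex.I)⁻¹ •
          circleIntegral
            (fun ζ : ℂ => F ζ * Ring.inverse (ζ • (1 : X →L[ℂ] X) - T)) (c : ℂ) R) x := by
  let Cₗ : X →L⋆[ℂ] X :=
    { toFun := C, map_add' := hC_add, map_smul' := hC_smul, cont := hC_cont }
  have hCₗ : Function.Involutive Cₗ := hC_inv
  set f := fun ζ : ℂ => F ζ * Ring.inverse (ζ • (1 : X →L[ℂ] X) - T)
  have hf : CircleIntegrable f c R :=
    (hFcont.mul (continuousOn_ringInverse_smul_one_sub T hres)).circleIntegrable hR.le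
  have hT' : Cₗ.flat T = T := ContinuousLinearMap.ext hT
  have hflat_f : Set.EqOn (fun ζ => Cₗ.flat (f (conj ζ))) f (sphere (c : ℂ) R) := by
    intro ζ hζ
    have hF : Cₗ.flat (F (conj ζ)) = F ζ := by
      ext x; simp [Cₗ, hFstem ζ hζ, hC_inv]
    simp only [f, ContinuousLinearMap.flat_mul hCₗ, ContinuousLinearMap.flat_ringInverse hCₗ,
      map_sub, map_smulₛₗ, ContinuousLinearMap.flat_one hCₗ, hF, hT', Complex.conj_conj]
  have hconj : conj (2 * (Real.pi : ℂ) * I)⁻¹ = -(2 * (Real.pi : ℂ) * I)⁻¹ := by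
    simp [map_ofNat]
  suffices hG : Cₗ.flat ((2 * (Real.pi : ℂ) * I)⁻¹ • ∮ z in C(c, R), f z) =
      (2 * (Real.pi : ℂ) * I)⁻¹ • ∮ z in C(c, R), f z from
    fun x => DFunLike.congr_fun hG x
  rw [map_smulₛₗ, Cₗ.flat.conjLinear_map_circleIntegral hf, Complex.conj_ofReal,
    circleIntegral.integral_congr hR.le hflat_f, hconj, neg_smul_neg]
end
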